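/- Let c : 𝔰 × 𝔰 → ℂ be a Chevalley–Eilenberg 2-cocycle for the trivial representation of 𝔰 on ℂ. Then c is a Chevalley–Eilenberg 2-coboundary if and only if c(H_j, H_k) = 0 for all 1 ≤ j ≤ r and 1 ≤ k ≤ r. In this case an explicit primitive is given by the ℝ-linear map α : 𝔰 → ℂ with α(H_j) = 0, α(v) = c(H_j, v) for v ∈ V_j, and α(E_j) = c(H_j, E_j)/2, which satisfies c(X, Y) = α([X, Y]) for all X, Y ∈ 𝔰. -/

import Mathlib

variable {r : ℕ} {𝔰 : Type} [LieRing 𝔰] [LieAlgebra ℝ 𝔰]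

/-- The `j`-th block `𝔰_j = ℝH_j ⊕ V_j ⊕ ℝE_j` of the Pyatetskii–Shapiro decomposition. -/
def psBlock (H E : Fin r → 𝔰) (V : Fin r → Submodule ℝ 𝔰) (j : Fin r) : Submodule ℝ 𝔰 :=
  Submodule.span ℝ {H j} ⊔ V j ⊔ Submodule.span ℝ {E j}

/-- The subspace `𝔰_r ⊕ … ⊕ 𝔰_{j+1}`. -/
def psUpper (H E : Fin r → 𝔰) (V : Fin r → Submodule ℝ 𝔰) (j : Fin r) : Submodule ℝ 𝔰 :=
  ⨆ k : Fin r, ⨆ _ : j < k, psBlock H E V k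

/-- `𝔰` is a Lie algebra in Pyatetskii–Shapiro normal form of rank `r`, with data
`H_j, E_j, V_j, Ω_j`. -/
structure IsPSAlgebra (H E : Fin r → 𝔰) (V : Fin r → Submodule ℝ 𝔰)
    (Ω : Fin r → 𝔰 →ₗ[ℝ] 𝔰 →ₗ[ℝ] ℝ) : Prop where
  /-- the rank is at least one -/
  rank_pos : 0 < r
  /-- as a vector space, `𝔰` is the direct sum of the blocks `𝔰_j` … -/
  total : (⨆ j, psBlock H E V j) = ⊤
  indep : iSupIndep (psBlock H E V)
  /-- … and each block is the internal direct sum `ℝH_j ⊕ V_j ⊕ ℝE_j` -/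
  inner_indep : ∀ (j : Fin r) (a b : ℝ), ∀ v ∈ V j,
    a • H j + v + b • E j = 0 → a = 0 ∧ v = 0 ∧ b = 0
  /-- `Ω_j` is antisymmetric on `V_j` … -/
  omega_anti : ∀ j, ∀ v ∈ V j, ∀ w ∈ V j, Ω j v w = - Ω j w v
  /-- … and nondegenerate on `V_j` -/
  omega_nondeg : ∀ j, ∀ v ∈ V j, (∀ w ∈ V j, Ω j v w = 0) → v = 0
  /-- `[v, E_j] = 0` for `v ∈ V_j` -/
  lie_vE : ∀ j, ∀ v ∈ V j, ⁅v, E j⁆ = 0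
  /-- `[v, v'] = Ω_j(v, v') • E_j` for `v, v' ∈ V_j` -/
  lie_vv : ∀ j, ∀ v ∈ V j, ∀ w ∈ V j, ⁅v, w⁆ = Ω j v w • E j
  /-- `[H_j, v + z•E_j] = v + 2z•E_j` -/
  lie_H : ∀ j, ∀ v ∈ V j, ∀ z : ℝ, ⁅H j, v + z • E j⁆ = v + (2 * z) • E j
  /-- `[X, H_j] = 0` for `X ∈ 𝔰_r ⊕ … ⊕ 𝔰_{j+1}` -/
  lie_upper_H : ∀ j, ∀ X ∈ psUpper H E V j, ⁅X, H j⁆ = 0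
  /-- `[X, E_j] = 0` for `X ∈ 𝔰_r ⊕ … ⊕ 𝔰_{j+1}` -/
  lie_upper_E : ∀ j, ∀ X ∈ psUpper H E V j, ⁅X, E j⁆ = 0
  /-- `[X, V_j] ⊆ V_j` for `X ∈ 𝔰_r ⊕ … ⊕ 𝔰_{j+1}` -/
  lie_upper_V : ∀ j, ∀ X ∈ psUpper H E V j, ∀ v ∈ V j, ⁅X, v⁆ ∈ V j
  /-- `ad_X ∈ 𝔰𝔭(V_j, Ω_j)` for `X ∈ 𝔰_r ⊕ … ⊕ 𝔰_{j+1}` -/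
  omega_invar : ∀ j, ∀ X ∈ psUpper H E V j, ∀ v ∈ V j, ∀ w ∈ V j,
    Ω j ⁅X, v⁆ w + Ω j v ⁅X, w⁆ = 0

/-- `c` is a Chevalley–Eilenberg 2-cocycle on `𝔰` for the trivial representation on `ℂ`. -/
def IsCE2Cocycle (c : 𝔰 →ₗ[ℝ] 𝔰 →ₗ[ℝ] ℂ) : Prop :=
  (∀ X Y : 𝔰, c X Y = - c Y X) ∧
  (∀ X Y Z : 𝔰, c ⁅X, Y⁆ Z + c ⁅Y, Z⁆ X + c ⁅Z, X⁆ Y = 0)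

/-- `c` is a Chevalley–Eilenberg 2-coboundary on `𝔰` for the trivial representation on `ℂ`. -/
def IsCE2Coboundary (c : 𝔰 →ₗ[ℝ] 𝔰 →ₗ[ℝ] ℂ) : Prop :=
  ∃ α : 𝔰 →ₗ[ℝ] ℂ, ∀ X Y : 𝔰, c X Y = α ⁅X, Y⁆

/-!
Cartan's formula `c ⁅Z, X⁆ Y + c X ⁅Z, Y⁆ = c Z ⁅X, Y⁆` for a 2-cocycle gives
`(a + b) c(X, Y) = c(Z, ⁅X, Y⁆)` whenever `X, Y` are eigenvectors of `ad Z` with eigenvalues `a, b`.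
The generators `H_j`, `v ∈ V_j`, `E_j` of `𝔰_j` have `ad H_j`-eigenvalues `0, 1, 2`, everything in
`𝔰_k` with `k > j` is killed by `ad H_j`, and `H_j, E_j` are killed by `ad H_k`. For every pair of
generators except `(H_j, H_k)` one of these `Z`s has `a + b ≠ 0`, which expresses `c` on the pair as
`α ⁅X, Y⁆` with `α = c(H_j, ·) / weight` on `𝔰_j`. The pairs `(H_j, H_k)` are the only obstruction,
because `⁅H_j, H_k⁆ = 0`.
-/

theorem LinearMap.ext₂_on {R M N Q : Type*} [CommSemiring R] [AddCommMonoid M] [Module R M]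
    [AddCommMonoid N] [Module R N] [AddCommMonoid Q] [Module R Q] {s : Set M} {t : Set N}
    {f g : M →ₗ[R] N →ₗ[R] Q} (hs : Submodule.span R s = ⊤) (ht : Submodule.span R t = ⊤)
    (h : ∀ x ∈ s, ∀ y ∈ t, f x y = g x y) : f = g :=
  LinearMap.ext_on hs fun x hx => LinearMap.ext_on ht fun y hy => h x hx y hy

theorem DirectSum.IsInternal.exists_linearMap_eq_on {R M N ι : Type*} [Ring R] [AddCommGroup M]
    [Module R M] [AddCommMonoid N] [Module R N] [DecidableEq ι] {p : ι → Submodule R M}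
    (hp : DirectSum.IsInternal p) (f : ι → M →ₗ[R] N) :
    ∃ g : M →ₗ[R] N, ∀ i, ∀ x ∈ p i, g x = f i x := by
  let e := LinearEquiv.ofBijective (DirectSum.coeLinearMap p) hp
  refine ⟨DirectSum.toModule R ι N (fun i => f i ∘ₗ (p i).subtype) ∘ₗ e.symm.toLinearMap,
    fun i x hx => ?_⟩
  have he : e.symm x = DirectSum.lof R ι (fun i => p i) i ⟨x, hx⟩ := by
    rw [LinearEquiv.symm_apply_eq, DirectSum.lof_eq_of]
    exact (DirectSum.coeLinearMap_of p i ⟨x, hx⟩).symm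
  simp [he]

namespace IsCE2Cocycle

variable {c : 𝔰 →ₗ[ℝ] 𝔰 →ₗ[ℝ] ℂ}

theorem apply_self (hc : IsCE2Cocycle c) (X : 𝔰) : c X X = 0 := by
  linear_combination hc.1 X X / 2

theorem apply_swap_eq_of_apply_eq (hc : IsCE2Cocycle c) {α : 𝔰 →ₗ[ℝ] ℂ} {X Y : 𝔰}
    (h : c X Y = α ⁅X, Y⁆) : c Y X = α ⁅Y, X⁆ := by
  rw [hc.1, h, ← lie_skew, map_neg, neg_neg]

theorem apply_lie_add_apply_lie (hc : IsCE2Cocycle c) (Z X Y : 𝔰) :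
    c ⁅Z, X⁆ Y + c X ⁅Z, Y⁆ = c Z ⁅X, Y⁆ := by
  have h := hc.2 Z X Y
  rw [hc.1 ⁅X, Y⁆, hc.1 ⁅Y, Z⁆, ← lie_skew Y Z, map_neg] at h
  linear_combination h

theorem smul_apply_of_lie_eq_smul (hc : IsCE2Cocycle c) {Z X Y : 𝔰} {a b : ℝ}
    (hX : ⁅Z, X⁆ = a • X) (hY : ⁅Z, Y⁆ = b • Y) : (a + b) • c X Y = c Z ⁅X, Y⁆ := by
  rw [← hc.apply_lie_add_apply_lie, hX, hY, map_smul, LinearMap.smul_apply, map_smul, add_smul]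

theorem apply_eq_zero_of_lie_eq_smul (hc : IsCE2Cocycle c) {Z X Y : 𝔰} {a b : ℝ}
    (hX : ⁅Z, X⁆ = a • X) (hY : ⁅Z, Y⁆ = b • Y) (hab : a + b ≠ 0) (hXY : ⁅X, Y⁆ = 0) :
    c X Y = 0 := by
  have h := hc.smul_apply_of_lie_eq_smul hX hY
  rwa [hXY, map_zero, smul_eq_zero, or_iff_right hab] at h

end IsCE2Cocycle

section psGen

variable (H E : Fin r → 𝔰) (V : Fin r → Submodule ℝ 𝔰)

def psGen (j : Fin r) : Set 𝔰 := {H j} ∪ V j ∪ {E j}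

theorem H_mem_psGen (j : Fin r) : H j ∈ psGen H E V j := Or.inl (Or.inl rfl)

theorem span_psGen (j : Fin r) : Submodule.span ℝ (psGen H E V j) = psBlock H E V j := by
  rw [psGen, Submodule.span_union, Submodule.span_union, Submodule.span_eq]
  rfl

variable {H E V}

theorem mem_psBlock_of_mem_psGen {j : Fin r} {X : 𝔰} (hX : X ∈ psGen H E V j) :
    X ∈ psBlock H E V j :=
  span_psGen H E V j ▸ Submodule.subset_span hX

theorem mem_psUpper_of_mem_psGen {j k : Fin r} (hjk : j < k) {X : 𝔰} (hX : X ∈ psGen H E V k) :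
    X ∈ psUpper H E V j :=
  le_iSup₂ (f := fun k (_ : j < k) => psBlock H E V k) k hjk (mem_psBlock_of_mem_psGen hX)

end psGen

namespace IsPSAlgebra

variable {H E : Fin r → 𝔰} {V : Fin r → Submodule ℝ 𝔰} {Ω : Fin r → 𝔰 →ₗ[ℝ] 𝔰 →ₗ[ℝ] ℝ}

theorem span_iUnion_psGen (P : IsPSAlgebra H E V Ω) :
    Submodule.span ℝ (⋃ j, psGen H E V j) = ⊤ := by
  simp_rw [Submodule.span_iUnion, span_psGen]
  exact P.total

theorem lie_H_of_mem (P : IsPSAlgebra H E V Ω) {j : Fin r} {v : 𝔰} (hv : v ∈ V j) :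
    ⁅H j, v⁆ = v := by
  simpa using P.lie_H j v hv 0

theorem lie_H_E (P : IsPSAlgebra H E V Ω) (j : Fin r) : ⁅H j, E j⁆ = (2 : ℝ) • E j := by
  simpa using P.lie_H j 0 (V j).zero_mem 1

theorem lie_H_of_mem_psUpper (P : IsPSAlgebra H E V Ω) {j : Fin r} {X : 𝔰}
    (hX : X ∈ psUpper H E V j) : ⁅H j, X⁆ = 0 := by
  rw [← lie_skew, P.lie_upper_H j X hX, neg_zero]

theorem lie_H_H (P : IsPSAlgebra H E V Ω) (j k : Fin r) : ⁅H j, H k⁆ = 0 := by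
  rcases lt_trichotomy j k with hjk | rfl | hkj
  · exact P.lie_H_of_mem_psUpper (mem_psUpper_of_mem_psGen hjk (H_mem_psGen H E V k))
  · exact lie_self _
  · exact P.lie_upper_H k (H j) (mem_psUpper_of_mem_psGen hkj (H_mem_psGen H E V j))

theorem exists_primitive_candidate (P : IsPSAlgebra H E V Ω) (c : 𝔰 →ₗ[ℝ] 𝔰 →ₗ[ℝ] ℂ) :
    ∃ α : 𝔰 →ₗ[ℝ] ℂ, (∀ j, α (H j) = 0) ∧ (∀ j, ∀ v ∈ V j, α v = c (H j) v) ∧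
      ∀ j, α (E j) = c (H j) (E j) / 2 := by
  let adH (j : Fin r) : Module.End ℝ 𝔰 := LieAlgebra.ad ℝ 𝔰 (H j)
  have hInt := DirectSum.isInternal_submodule_of_iSupIndep_of_iSup_eq_top P.indep P.total
  -- `p(t) = 7t/4 - 3t²/4` takes the values `0, 1, 1/2` at the weights `0, 1, 2` of `H_j, V_j, E_j`.
  obtain ⟨α, hα⟩ := hInt.exists_linearMap_eq_on fun j =>
    c (H j) ∘ₗ ((7 / 4 : ℝ) • adH j - (3 / 4 : ℝ) • (adH j * adH j))
  have hα_block (j : Fin r) (X : 𝔰) (hX : X ∈ psBlock H E V j) :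
      α X = c (H j) ((7 / 4 : ℝ) • ⁅H j, X⁆ - (3 / 4 : ℝ) • ⁅H j, ⁅H j, X⁆⁆) := by
    simp [hα j X hX, adH]
  refine ⟨α, fun j => ?_, fun j v hv => ?_, fun j => ?_⟩
  · simp [hα_block j _ (mem_psBlock_of_mem_psGen (H_mem_psGen H E V j))]
  · rw [hα_block j v (mem_psBlock_of_mem_psGen (Or.inl (Or.inr hv))),
      P.lie_H_of_mem hv, P.lie_H_of_mem hv, ← sub_smul]
    norm_num
  · rw [hα_block j _ (mem_psBlock_of_mem_psGen (Or.inr rfl)), P.lie_H_E, lie_smul,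
      P.lie_H_E, smul_smul, smul_smul, smul_smul, ← sub_smul, map_smul, Complex.real_smul]
    norm_num
    ring

variable {c : 𝔰 →ₗ[ℝ] 𝔰 →ₗ[ℝ] ℂ} {α : 𝔰 →ₗ[ℝ] ℂ}

theorem apply_eq_apply_lie_of_mem_psGen (P : IsPSAlgebra H E V Ω) (hc : IsCE2Cocycle c)
    (hαV : ∀ j, ∀ v ∈ V j, α v = c (H j) v) (hαE : ∀ j, α (E j) = c (H j) (E j) / 2)
    {j : Fin r} {X Y : 𝔰} (hX : X ∈ psGen H E V j) (hY : Y ∈ psGen H E V j) :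
    c X Y = α ⁅X, Y⁆ := by
  have HH : c (H j) (H j) = α ⁅H j, H j⁆ := by rw [lie_self, map_zero, hc.apply_self]
  have HV {v : 𝔰} (hv : v ∈ V j) : c (H j) v = α ⁅H j, v⁆ := by rw [P.lie_H_of_mem hv, hαV j v hv]
  have HE : c (H j) (E j) = α ⁅H j, E j⁆ := by
    rw [P.lie_H_E, map_smul, hαE, Complex.real_smul]
    push_cast
    ring
  have VE {v : 𝔰} (hv : v ∈ V j) : c v (E j) = α ⁅v, E j⁆ := by
    rw [P.lie_vE j v hv, map_zero]
    exact hc.apply_eq_zero_of_lie_eq_smul (by rw [P.lie_H_of_mem hv, one_smul]) (P.lie_H_E j)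
      (by norm_num) (P.lie_vE j v hv)
  have VV {v w : 𝔰} (hv : v ∈ V j) (hw : w ∈ V j) : c v w = α ⁅v, w⁆ := by
    have h := hc.smul_apply_of_lie_eq_smul (Z := H j) (a := 1) (b := 1)
      (by rw [P.lie_H_of_mem hv, one_smul]) (by rw [P.lie_H_of_mem hw, one_smul])
    rw [P.lie_vv j v hv w hw, map_smul] at h ⊢
    rw [hαE]
    simp only [Complex.real_smul] at h ⊢
    push_cast at h
    linear_combination h / 2
  have EE : c (E j) (E j) = α ⁅E j, E j⁆ := by rw [lie_self, map_zero, hc.apply_self]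
  rcases hX with (rfl | hX) | rfl <;> rcases hY with (rfl | hY) | rfl
  exacts [HH, HV hY, HE, hc.apply_swap_eq_of_apply_eq (HV hX), VV hX hY, VE hX,
    hc.apply_swap_eq_of_apply_eq HE, hc.apply_swap_eq_of_apply_eq (VE hY), EE]

theorem exists_lie_H_eq_smul_of_mem_psGen (P : IsPSAlgebra H E V Ω) {k : Fin r} {X : 𝔰}
    (hX : X ∈ psGen H E V k) (hXH : X ≠ H k) : ∃ a : ℝ, a ≠ 0 ∧ ⁅H k, X⁆ = a • X := by
  rcases hX with (rfl | hX) | rfl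
  · exact (hXH rfl).elim
  · exact ⟨1, one_ne_zero, by rw [P.lie_H_of_mem hX, one_smul]⟩
  · exact ⟨2, two_ne_zero, P.lie_H_E k⟩

theorem apply_eq_apply_lie_of_lt (P : IsPSAlgebra H E V Ω) (hc : IsCE2Cocycle c)
    (hHH : ∀ j k, c (H j) (H k) = 0) (hαV : ∀ j, ∀ v ∈ V j, α v = c (H j) v)
    {j k : Fin r} (hjk : j < k) {X Y : 𝔰} (hX : X ∈ psGen H E V k) (hY : Y ∈ psGen H E V j) :
    c X Y = α ⁅X, Y⁆ := by
  have hXu := mem_psUpper_of_mem_psGen hjk hX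
  have hHu := mem_psUpper_of_mem_psGen hjk (H_mem_psGen H E V k)
  have apply_eq_zero {Y : 𝔰} (hHY : ⁅H k, Y⁆ = 0) (hXY : ⁅X, Y⁆ = 0) (hcHY : c (H k) Y = 0) :
      c X Y = 0 := by
    by_cases hXH : X = H k
    · rwa [hXH]
    obtain ⟨a, ha, hXa⟩ := P.exists_lie_H_eq_smul_of_mem_psGen hX hXH
    exact hc.apply_eq_zero_of_lie_eq_smul hXa (b := 0) (by rw [hHY, zero_smul]) (by simpa) hXY
  rcases hY with (rfl | hv) | rfl
  · rw [P.lie_upper_H j X hXu, map_zero]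
    exact apply_eq_zero (P.lie_H_H k j) (P.lie_upper_H j X hXu) (hHH k j)
  · rw [hαV j _ (P.lie_upper_V j X hXu Y hv), ← one_smul ℝ (c X Y), ← zero_add (1 : ℝ)]
    exact hc.smul_apply_of_lie_eq_smul (by rw [P.lie_H_of_mem_psUpper hXu, zero_smul])
      (by rw [P.lie_H_of_mem hv, one_smul])
  · rw [P.lie_upper_E j X hXu, map_zero]
    refine apply_eq_zero (P.lie_upper_E j (H k) hHu) (P.lie_upper_E j X hXu) ?_
    exact hc.apply_eq_zero_of_lie_eq_smul (Z := H j) (a := 0) (b := 2)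
      (by rw [P.lie_H_H, zero_smul]) (P.lie_H_E j) (by norm_num) (P.lie_upper_E j (H k) hHu)

theorem apply_eq_apply_lie (P : IsPSAlgebra H E V Ω) (hc : IsCE2Cocycle c)
    (hHH : ∀ j k, c (H j) (H k) = 0) (hαV : ∀ j, ∀ v ∈ V j, α v = c (H j) v)
    (hαE : ∀ j, α (E j) = c (H j) (E j) / 2) (X Y : 𝔰) : c X Y = α ⁅X, Y⁆ := by
  suffices c = (LieAlgebra.ad ℝ 𝔰 : 𝔰 →ₗ[ℝ] Module.End ℝ 𝔰).compr₂ α by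
    rw [this]
    rfl
  refine LinearMap.ext₂_on P.span_iUnion_psGen P.span_iUnion_psGen ?_
  simp only [Set.mem_iUnion]
  rintro X ⟨k, hX⟩ Y ⟨j, hY⟩
  show c X Y = α ⁅X, Y⁆
  rcases lt_trichotomy j k with hjk | rfl | hkj
  · exact P.apply_eq_apply_lie_of_lt hc hHH hαV hjk hX hY
  · exact P.apply_eq_apply_lie_of_mem_psGen hc hαV hαE hX hY
  · exact hc.apply_swap_eq_of_apply_eq (P.apply_eq_apply_lie_of_lt hc hHH hαV hkj hY hX)

end IsPSAlgebra

theorem statement10_general {r : ℕ} (𝔰 : Type) [LieRing 𝔰] [LieAlgebra ℝ 𝔰]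
    (H E : Fin r → 𝔰) (V : Fin r → Submodule ℝ 𝔰) (Ω : Fin r → 𝔰 →ₗ[ℝ] 𝔰 →ₗ[ℝ] ℝ)
    (P : IsPSAlgebra H E V Ω)
    (c : 𝔰 →ₗ[ℝ] 𝔰 →ₗ[ℝ] ℂ) (hc : IsCE2Cocycle c) :
    -- `c` is a coboundary iff `c(H_j, H_k) = 0` for all `j, k` …
    (IsCE2Coboundary c ↔ ∀ j k : Fin r, c (H j) (H k) = 0) ∧
    -- … in which case the explicitly prescribed linear map `α` is a primitive of `c`:
    ((∀ j k : Fin r, c (H j) (H k) = 0) →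
      ∃ α : 𝔰 →ₗ[ℝ] ℂ,
        (∀ j, α (H j) = 0) ∧
        (∀ j, ∀ v ∈ V j, α v = c (H j) v) ∧
        (∀ j, α (E j) = c (H j) (E j) / 2) ∧
        (∀ X Y : 𝔰, c X Y = α ⁅X, Y⁆)) := by
  obtain ⟨α, hαH, hαV, hαE⟩ := P.exists_primitive_candidate c
  have primitive (hHH : ∀ j k : Fin r, c (H j) (H k) = 0) : ∀ X Y, c X Y = α ⁅X, Y⁆ :=
    P.apply_eq_apply_lie hc hHH hαV hαE
  refine ⟨⟨?_, fun hHH => ⟨α, primitive hHH⟩⟩, fun hHH => ⟨α, hαH, hαV, hαE, primitive hHH⟩⟩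
  rintro ⟨β, hβ⟩ j k
  rw [hβ, P.lie_H_H, map_zero]

/-- A Chevalley–Eilenberg 2-cocycle `c` on `𝔰` is a 2-coboundary iff
`c(H_j, H_k) = 0` for all `j, k`; in this case the linear map `α` with `α(H_j) = 0`,
`α(v) = c(H_j, v)` for `v ∈ V_j` and `α(E_j) = c(H_j, E_j)/2` is a primitive of `c`. -/
theorem statement10 {r : ℕ} (𝔰 : Type) [LieRing 𝔰] [LieAlgebra ℝ 𝔰] [Module.Finite ℝ 𝔰]
    (H E : Fin r → 𝔰) (V : Fin r → Submodule ℝ 𝔰) (Ω : Fin r → 𝔰 →ₗ[ℝ] 𝔰 →ₗ[ℝ] ℝ)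
    (P : IsPSAlgebra H E V Ω)
    (c : 𝔰 →ₗ[ℝ] 𝔰 →ₗ[ℝ] ℂ) (hc : IsCE2Cocycle c) :
    -- `c` is a coboundary iff `c(H_j, H_k) = 0` for all `j, k` …
    (IsCE2Coboundary c ↔ ∀ j k : Fin r, c (H j) (H k) = 0) ∧
    -- … in which case the explicitly prescribed linear map `α` is a primitive of `c`:
    ((∀ j k : Fin r, c (H j) (H k) = 0) →
      ∃ α : 𝔰 →ₗ[ℝ] ℂ,
        (∀ j, α (H j) = 0) ∧
        (∀ j, ∀ v ∈ V j, α v = c (H j) v) ∧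
        (∀ j, α (E j) = c (H j) (E j) / 2) ∧
        (∀ X Y : 𝔰, c X Y = α ⁅X, Y⁆)) :=
  statement10_general 𝔰 H E V Ω P c hc
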